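/- Let q be a positive definite quadratic form on ℝ^d. Then for every s ∈ ℂ with Re(s) > d/2 the family (q(n)^{−s})_{n∈ℤ^d∖{0}} is absolutely summable, and the function s ↦ Σ_{n∈ℤ^d∖{0}} q(n)^{−s} is holomorphic on the half plane {s ∈ ℂ : Re(s) > d/2}. -/

import Mathlib

open MeasureTheory Filter Finset Complex Metric
open scoped Topology

noncomputable section

/-- The vector of `ℝ^d` with integer coordinates `n ∈ ℤ^d`. -/
noncomputable def intVec {d : ℕ} (n : Fin d → ℤ) : EuclideanSpace ℝ (Fin d) :=
  (EuclideanSpace.equiv (Fin d) ℝ).symm fun i => (n i : ℝ)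

/-!
Positivity and homogeneity of degree two give `q x ≥ c ‖x‖²`, where `c > 0` is the minimum of `q`
on the unit sphere. Hence `q(n)^{-σ} ≤ c^{-σ} ‖n‖^{-2σ}`, and the lattice sum `∑ ‖n‖^{-2σ}`
converges for `2σ > d`. For the holomorphy, on a strip `a < Re s < b` with `a > d/2` every term is
bounded by `q(n)^{-a} + q(n)^{-b}`, so the series converges uniformly there.
-/

theorem exists_pos_mul_norm_sq_le {E : Type*} [NormedAddCommGroup E] [NormedSpace ℝ E]
    [FiniteDimensional ℝ E] {q : E → ℝ} (hcont : Continuous q)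
    (hhom : ∀ (t : ℝ) (x : E), q (t • x) = t ^ 2 * q x) (hpos : ∀ x, x ≠ 0 → 0 < q x) :
    ∃ c > 0, ∀ x, c * ‖x‖ ^ 2 ≤ q x := by
  have hq0 : q 0 = 0 := by simpa using hhom 0 0
  cases subsingleton_or_nontrivial E with
  | inl _ => exact ⟨1, one_pos, fun x => by simp [Subsingleton.elim x 0, hq0]⟩
  | inr _ =>
    obtain ⟨u₀, hu₀, hmin⟩ := (isCompact_sphere (0 : E) 1).exists_isMinOn
      (NormedSpace.sphere_nonempty.mpr zero_le_one) hcont.continuousOn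
    have hu₀ : ‖u₀‖ = 1 := mem_sphere_zero_iff_norm.mp hu₀
    refine ⟨q u₀, hpos u₀ (ne_zero_of_norm_ne_zero (by simp [hu₀])), fun x => ?_⟩
    rcases eq_or_ne x 0 with rfl | hx
    · simp [hq0]
    have hnx : ‖x‖ ≠ 0 := norm_ne_zero_iff.mpr hx
    have hu : ‖x‖⁻¹ • x ∈ sphere (0 : E) 1 := by
      simp [norm_smul, inv_mul_cancel₀ hnx]
    calc q u₀ * ‖x‖ ^ 2 ≤ q (‖x‖⁻¹ • x) * ‖x‖ ^ 2 := by gcongr; exact hmin hu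
      _ = q x := by rw [hhom]; field_simp

theorem summable_rpow_neg_of_mul_norm_sq_le {ι E : Type*} [NormedAddCommGroup E] {q : E → ℝ}
    {c : ℝ} (hc : 0 < c) (hq : ∀ x, c * ‖x‖ ^ 2 ≤ q x) {v : ι → E} (hv : ∀ i, v i ≠ 0)
    {σ : ℝ} (hσ : 0 ≤ σ) (hsum : Summable fun i => ‖v i‖ ^ (-(2 * σ))) :
    Summable fun i => q (v i) ^ (-σ) := by
  refine .of_nonneg_of_le (fun i => ?_) (fun i => ?_) (hsum.mul_left (c ^ (-σ)))
  · exact Real.rpow_nonneg ((by positivity : 0 ≤ c * ‖v i‖ ^ 2).trans (hq _)) _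
  have hv' : 0 < c * ‖v i‖ ^ 2 := by have := norm_pos_iff.mpr (hv i); positivity
  calc q (v i) ^ (-σ) ≤ (c * ‖v i‖ ^ 2) ^ (-σ) :=
        Real.rpow_le_rpow_of_nonpos hv' (hq _) (neg_nonpos.mpr hσ)
    _ = c ^ (-σ) * ‖v i‖ ^ (-(2 * σ)) := by
        rw [Real.mul_rpow hc.le (by positivity), ← Real.rpow_natCast,
          ← Real.rpow_mul (norm_nonneg _)]
        push_cast; ring_nf

theorem intVec_ne_zero {d : ℕ} {n : Fin d → ℤ} (hn : n ≠ 0) : intVec n ≠ 0 := by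
  contrapose! hn
  ext i
  simpa [intVec] using congrArg (· i) hn

theorem summable_norm_intVec_rpow {d : ℕ} {r : ℝ} (hr : d < r) :
    Summable fun n : Fin d → ℤ => ‖intVec n‖ ^ (-r) := by
  let b := (EuclideanSpace.basisFun (Fin d) ℝ).toBasis
  let L := Submodule.span ℤ (Set.range b)
  have hL : Summable fun z : L => ‖z‖ ^ (-r) := ZLattice.summable_norm_rpow L (-r) (by
    rw [ZLattice.rank ℝ L, finrank_euclideanSpace_fin]; linarith)
  let e : (Fin d → ℤ) ≃ₗ[ℤ] L := (b.restrictScalars ℤ).equivFun.symm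
  have he : ∀ n, (e n : EuclideanSpace ℝ (Fin d)) = intVec n := by
    intro n
    ext i
    rw [Module.Basis.equivFun_symm_apply]
    simp only [Submodule.coe_sum, Submodule.coe_smul, Module.Basis.restrictScalars_apply]
    simp [b, intVec, Pi.single_apply]
  exact (e.toEquiv.summable_iff.mpr hL).congr fun n => by simp [he]

theorem rpow_neg_le_add_of_mem_Icc {x a b σ : ℝ} (hx : 0 < x) (hσ : σ ∈ Set.Icc a b) :
    x ^ (-σ) ≤ x ^ (-a) + x ^ (-b) := by
  rcases le_or_gt 1 x with h1 | h1
  · exact (Real.rpow_le_rpow_of_exponent_le h1 (neg_le_neg hσ.1)).trans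
      (le_add_of_nonneg_right (Real.rpow_nonneg hx.le _))
  · exact (Real.rpow_le_rpow_of_exponent_ge hx h1.le (neg_le_neg hσ.2)).trans
      (le_add_of_nonneg_left (Real.rpow_nonneg hx.le _))

theorem differentiableOn_tsum_ofReal_cpow_neg {ι : Type*} {l : ι → ℝ} (hl : ∀ i, 0 < l i)
    {σ₀ : ℝ} (hsum : ∀ σ, σ₀ < σ → Summable fun i => l i ^ (-σ)) :
    DifferentiableOn ℂ (fun s : ℂ => ∑' i, (l i : ℂ) ^ (-s)) {s | σ₀ < s.re} := by
  intro s₀ (hs₀ : σ₀ < s₀.re)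
  obtain ⟨a, hσ₀a, has₀⟩ := exists_between hs₀
  obtain ⟨b, hs₀b⟩ := exists_gt s₀.re
  let U : Set ℂ := re ⁻¹' Set.Ioo a b
  have hU : IsOpen U := isOpen_Ioo.preimage continuous_re
  have hdiff : DifferentiableOn ℂ (fun s : ℂ => ∑' i, (l i : ℂ) ^ (-s)) U := by
    refine differentiableOn_tsum_of_summable_norm
      ((hsum a hσ₀a).add (hsum b (by linarith))) (fun i s _ => ?_) hU (fun i s hs => ?_)
    · exact (differentiableAt_id.neg.const_cpow
        (Or.inl (ofReal_ne_zero.mpr (hl i).ne'))).differentiableWithinAt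
    · rw [norm_cpow_eq_rpow_re_of_pos (hl i), neg_re]
      exact rpow_neg_le_add_of_mem_Icc (hl i) (Set.Ioo_subset_Icc_self hs)
  exact (hdiff.differentiableAt (hU.mem_nhds ⟨has₀, hs₀b⟩)).differentiableWithinAt

theorem epstein_series_holomorphic_general {d : ℕ}
    (A : Fin d → Fin d → ℝ)
    (q : EuclideanSpace ℝ (Fin d) → ℝ)
    (hq : ∀ x : EuclideanSpace ℝ (Fin d), q x = ∑ i, ∑ j, A i j * x i * x j)
    (hpos : ∀ x : EuclideanSpace ℝ (Fin d), x ≠ 0 → 0 < q x) :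
    (∀ s : ℂ, (d : ℝ) / 2 < s.re →
      Summable (fun n : {n : Fin d → ℤ // n ≠ 0} =>
        ‖((q (intVec n.1) : ℝ) : ℂ) ^ (-s)‖)) ∧
    DifferentiableOn ℂ
      (fun s : ℂ => ∑' n : {n : Fin d → ℤ // n ≠ 0}, ((q (intVec n.1) : ℝ) : ℂ) ^ (-s))
      {s : ℂ | (d : ℝ) / 2 < s.re} := by
  have hcont : Continuous q := by rw [funext hq]; fun_prop
  have hhom : ∀ (t : ℝ) x, q (t • x) = t ^ 2 * q x := by
    intro t x
    simp only [hq, PiLp.smul_apply, smul_eq_mul, Finset.mul_sum]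
    exact Finset.sum_congr rfl fun i _ => Finset.sum_congr rfl fun j _ => by ring
  obtain ⟨c, hc, hlow⟩ := exists_pos_mul_norm_sq_le hcont hhom hpos
  have hlat : ∀ n : {n : Fin d → ℤ // n ≠ 0}, 0 < q (intVec n.1) :=
    fun n => hpos _ (intVec_ne_zero n.2)
  have hsum : ∀ σ : ℝ, (d : ℝ) / 2 < σ →
      Summable fun n : {n : Fin d → ℤ // n ≠ 0} => q (intVec n.1) ^ (-σ) := fun σ hσ =>
    summable_rpow_neg_of_mul_norm_sq_le hc hlow (fun n => intVec_ne_zero n.2)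
      ((by positivity : (0 : ℝ) ≤ d / 2).trans hσ.le)
      ((summable_norm_intVec_rpow (by linarith)).subtype _)
  refine ⟨fun s hs => ?_, differentiableOn_tsum_ofReal_cpow_neg hlat hsum⟩
  simpa only [norm_cpow_eq_rpow_re_of_pos (hlat _), neg_re] using hsum s.re hs

/-- **The Epstein-type series of a positive definite quadratic form `q` on `ℝ^d` converges
absolutely and defines a holomorphic function on the half plane `Re(s) > d/2`.** -/
theorem epstein_series_holomorphic {d : ℕ} (hd : 0 < d)
    (A : Fin d → Fin d → ℝ)
    (q : EuclideanSpace ℝ (Fin d) → ℝ)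
    (hq : ∀ x : EuclideanSpace ℝ (Fin d), q x = ∑ i, ∑ j, A i j * x i * x j)
    (hpos : ∀ x : EuclideanSpace ℝ (Fin d), x ≠ 0 → 0 < q x) :
    (∀ s : ℂ, (d : ℝ) / 2 < s.re →
      Summable (fun n : {n : Fin d → ℤ // n ≠ 0} =>
        ‖((q (intVec n.1) : ℝ) : ℂ) ^ (-s)‖)) ∧
    DifferentiableOn ℂ
      (fun s : ℂ => ∑' n : {n : Fin d → ℤ // n ≠ 0}, ((q (intVec n.1) : ℝ) : ℂ) ^ (-s))
      {s : ℂ | (d : ℝ) / 2 < s.re} :=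
  epstein_series_holomorphic_general A q hq hpos
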